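/- Shifting an HTO by a constant via an auxiliary two-level system: consider a realization setup (A, B, H_B, b, U) with heat transfer operator Q. Let Δ : ℝ, C = Fin 2, H_C = Matrix.diagonal ![((Δ/2 : ℝ) : ℂ), ((-Δ/2 : ℝ) : ℂ)], σ_x = !![0, 1; 1, 0], and H_BC = H_B ⊗ₖ 1 + 1 ⊗ₖ H_C on B × C. Let Ṽ be the matrix on A × (B × C) obtained from U ⊗ₖ σ_x via the natural reindexing (A × B) × C ≃ A × (B × C). Then: (a) the Gibbs state of H_BC at inverse temperature b equals ρ_B ⊗ₖ ρ_C, where ρ_C is the Gibbs state of H_C at inverse temperature b; (b) Ṽᴴ * Ṽ = 1; (c) for every density matrix ρ on A, tr_{B×C} (Ṽ * (ρ ⊗ₖ (ρ_B ⊗ₖ ρ_C)) * Ṽᴴ) = tr_B (U * (ρ ⊗ₖ ρ_B) * Uᴴ); and (d) the heat transfer operator of the realization setup (A, B × C, H_BC, b, Ṽ) equals Q + ((Δ * Real.tanh (b * Δ / 2) : ℝ) : ℂ) • (1 : Matrix A A ℂ). -/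

import Mathlib

open Matrix Kronecker
open scoped ComplexOrder

noncomputable section

/-- A density matrix: positive semidefinite with trace 1. -/
def IsDensityMatrix {ι : Type*} [Fintype ι] (ρ : Matrix ι ι ℂ) : Prop :=
  ρ.PosSemidef ∧ ρ.trace = 1

/-- The matrix exponential. -/
noncomputable def mexp {ι : Type*} [Fintype ι] [DecidableEq ι] (M : Matrix ι ι ℂ) :
    Matrix ι ι ℂ :=
  NormedSpace.exp M

/-- Von Neumann entropy of a (Hermitian) matrix, via its eigenvalues. -/
noncomputable def vnEntropy {ι : Type*} [Fintype ι] [DecidableEq ι] (ρ : Matrix ι ι ℂ) : ℝ :=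
  if h : ρ.IsHermitian then -∑ i, h.eigenvalues i * Real.log (h.eigenvalues i) else 0

/-- The Gibbs state of the Hamiltonian `H` at inverse temperature `b`. -/
noncomputable def gibbs {ι : Type*} [Fintype ι] [DecidableEq ι] (H : Matrix ι ι ℂ) (b : ℝ) :
    Matrix ι ι ℂ :=
  (Matrix.trace (mexp (-b • H)))⁻¹ • mexp (-b • H)

/-- Equilibrium energy of the bath. -/
noncomputable def eqEnergy {ι : Type*} [Fintype ι] [DecidableEq ι] (H : Matrix ι ι ℂ) (b : ℝ) : ℝ :=
  (Matrix.trace (gibbs H b * H)).re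

/-- Partial trace over the second (bath) factor. -/
def ptraceB {A B : Type*} [Fintype B] (M : Matrix (A × B) (A × B) ℂ) : Matrix A A ℂ :=
  Matrix.of fun a a' => ∑ k : B, M (a, k) (a', k)

/-- Partial trace over the first (device) factor. -/
def ptraceA {A B : Type*} [Fintype A] (M : Matrix (A × B) (A × B) ℂ) : Matrix B B ℂ :=
  Matrix.of fun k k' => ∑ a : A, M (a, k) (a, k')

/-- The heat transfer operator of a realization setup. -/
noncomputable def hto {A B : Type*} [Fintype A] [DecidableEq A] [Fintype B] [DecidableEq B]
    (H_B : Matrix B B ℂ) (b : ℝ) (U : Matrix (A × B) (A × B) ℂ) : Matrix A A ℂ :=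
  ptraceB (((1 : Matrix A A ℂ) ⊗ₖ gibbs H_B b) * Uᴴ * ((1 : Matrix A A ℂ) ⊗ₖ H_B) * U)
    - eqEnergy H_B b • (1 : Matrix A A ℂ)

/-- Matrix logarithm of a Hermitian matrix through the continuous functional calculus. -/
noncomputable def mlog {ι : Type*} [Fintype ι] [DecidableEq ι] (ρ : Matrix ι ι ℂ) :
    Matrix ι ι ℂ :=
  if h : ρ.IsHermitian then h.cfc Real.log else 0

/-- Quantum relative entropy `S(σ‖ρ)`. -/
noncomputable def relEntropy {ι : Type*} [Fintype ι] [DecidableEq ι] (σ ρ : Matrix ι ι ℂ) : ℝ :=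
  (Matrix.trace (σ * (mlog σ - mlog ρ))).re

end


/-!
The bath Hamiltonian `H_B ⊗ 1 + 1 ⊗ H_C` is a sum of commuting terms, so its exponential, and
hence its Gibbs state, factorises. Conjugation by `U ⊗ σx` then acts factorwise, and taking the
partial trace over the qubit turns every qubit factor into a scalar: `σx` is unitary, so the state
terms reduce to `tr ρ_C = 1`, while `σx` exchanges the two levels, `σx H_C σx = -H_C`. The qubit
therefore adds `tr (ρ_C σx H_C σx) - E_C = -2 E_C = Δ tanh (bΔ/2)` to the heat transfer operator.
-/

section MatrixExponential

variable {ι κ : Type*} [Fintype ι] [DecidableEq ι] [Fintype κ] [DecidableEq κ]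

theorem AlgHom.map_mexp (φ : Matrix ι ι ℂ →ₐ[ℂ] Matrix κ κ ℂ) (M : Matrix ι ι ℂ) :
    φ (mexp M) = mexp (φ M) :=
  open scoped Norms.Operator in
  NormedSpace.map_exp φ φ.toLinearMap.continuous_of_finiteDimensional M

theorem mexp_kronecker_one (X : Matrix ι ι ℂ) :
    mexp (X ⊗ₖ (1 : Matrix κ κ ℂ)) = mexp X ⊗ₖ (1 : Matrix κ κ ℂ) := by
  simpa using ((kroneckerAlgEquiv ι κ ℂ).toAlgHom.comp
    (Algebra.TensorProduct.includeLeft (S := ℂ))).map_mexp X |>.symm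

theorem mexp_one_kronecker (Y : Matrix κ κ ℂ) :
    mexp ((1 : Matrix ι ι ℂ) ⊗ₖ Y) = (1 : Matrix ι ι ℂ) ⊗ₖ mexp Y := by
  simpa using ((kroneckerAlgEquiv ι κ ℂ).toAlgHom.comp
    Algebra.TensorProduct.includeRight).map_mexp Y |>.symm

theorem mexp_kronecker_one_add_one_kronecker (X : Matrix ι ι ℂ) (Y : Matrix κ κ ℂ) :
    mexp (X ⊗ₖ (1 : Matrix κ κ ℂ) + (1 : Matrix ι ι ℂ) ⊗ₖ Y) = mexp X ⊗ₖ mexp Y := by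
  have hcomm : Commute (X ⊗ₖ (1 : Matrix κ κ ℂ)) ((1 : Matrix ι ι ℂ) ⊗ₖ Y) := by
    simp only [Commute, SemiconjBy, ← mul_kronecker_mul, Matrix.one_mul, Matrix.mul_one]
  rw [mexp, Matrix.exp_add_of_commute _ _ hcomm, ← mexp, ← mexp, mexp_kronecker_one,
    mexp_one_kronecker, ← mul_kronecker_mul, Matrix.mul_one, Matrix.one_mul]

theorem mexp_diagonal (v : ι → ℂ) :
    mexp (diagonal v) = diagonal fun i => Complex.exp (v i) := by
  rw [mexp, Matrix.exp_diagonal]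
  congr
  funext i
  rw [Pi.coe_exp, Complex.exp_eq_exp_ℂ]

theorem posDef_mexp {M : Matrix ι ι ℂ} (hM : M.IsHermitian) : (mexp M).PosDef := by
  have hN : mexp M = (mexp ((1 / 2 : ℝ) • M))ᴴ * mexp ((1 / 2 : ℝ) • M) := by
    rw [mexp, mexp, (hM.smul (IsSelfAdjoint.all (1 / 2 : ℝ))).exp,
      ← Matrix.exp_add_of_commute _ _ (Commute.refl _), ← add_smul]
    norm_num
  rw [hN]
  exact .conjTranspose_mul_self _ (mulVec_injective_iff_isUnit.mpr (Matrix.isUnit_exp _))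

end MatrixExponential

section Gibbs

variable {ι κ : Type*} [Fintype ι] [DecidableEq ι] [Fintype κ] [DecidableEq κ]

theorem gibbs_kronecker_one_add_one_kronecker (H : Matrix ι ι ℂ) (K : Matrix κ κ ℂ) (b : ℝ) :
    gibbs (H ⊗ₖ (1 : Matrix κ κ ℂ) + (1 : Matrix ι ι ℂ) ⊗ₖ K) b = gibbs H b ⊗ₖ gibbs K b := by
  rw [gibbs, smul_add, ← smul_kronecker, ← kronecker_smul, mexp_kronecker_one_add_one_kronecker,
    trace_kronecker, mul_inv, mul_smul, ← kronecker_smul, ← smul_kronecker, gibbs, gibbs]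

theorem trace_gibbs [Nonempty ι] {H : Matrix ι ι ℂ} (hH : H.IsHermitian) (b : ℝ) :
    (gibbs H b).trace = 1 := by
  have hpos := (posDef_mexp (hH.smul (IsSelfAdjoint.all (-b)))).trace_pos
  rw [gibbs, trace_smul, smul_eq_mul, inv_mul_cancel₀ hpos.ne']

theorem eqEnergy_kronecker_one_add_one_kronecker [Nonempty ι] [Nonempty κ] {H : Matrix ι ι ℂ}
    {K : Matrix κ κ ℂ} (hH : H.IsHermitian) (hK : K.IsHermitian) (b : ℝ) :
    eqEnergy (H ⊗ₖ (1 : Matrix κ κ ℂ) + (1 : Matrix ι ι ℂ) ⊗ₖ K) b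
      = eqEnergy H b + eqEnergy K b := by
  rw [eqEnergy, gibbs_kronecker_one_add_one_kronecker, Matrix.mul_add, ← mul_kronecker_mul,
    ← mul_kronecker_mul, trace_add, trace_kronecker, trace_kronecker, Matrix.mul_one,
    Matrix.mul_one, trace_gibbs hH, trace_gibbs hK, mul_one, one_mul, Complex.add_re]
  rfl

end Gibbs

section PartialTrace

variable {A B C : Type*} [Fintype B]

theorem ptraceB_add (M N : Matrix (A × B) (A × B) ℂ) :
    ptraceB (M + N) = ptraceB M + ptraceB N := by
  ext a a'
  simp [ptraceB, Finset.sum_add_distrib]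

theorem ptraceB_kronecker (X : Matrix A A ℂ) (Y : Matrix B B ℂ) :
    ptraceB (X ⊗ₖ Y) = Y.trace • X := by
  ext a a'
  simp [ptraceB, trace, Finset.mul_sum, mul_comm]

theorem ptraceB_reindex_prodAssoc_kronecker [Fintype C] (M : Matrix (A × B) (A × B) ℂ)
    (N : Matrix C C ℂ) :
    ptraceB (reindex (Equiv.prodAssoc A B C) (Equiv.prodAssoc A B C) (M ⊗ₖ N))
      = N.trace • ptraceB M := by
  ext a a'
  simp [ptraceB, trace, Fintype.sum_prod_type, Finset.mul_sum, mul_comm, Finset.sum_comm (γ := C)]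

end PartialTrace

section CoupledSetup

variable {A B C : Type*}

theorem conjTranspose_reindex_prodAssoc_kronecker (M : Matrix (A × B) (A × B) ℂ)
    (N : Matrix C C ℂ) :
    (reindex (Equiv.prodAssoc A B C) (Equiv.prodAssoc A B C) (M ⊗ₖ N))ᴴ
      = reindex (Equiv.prodAssoc A B C) (Equiv.prodAssoc A B C) (Mᴴ ⊗ₖ Nᴴ) := by
  rw [conjTranspose_reindex, conjTranspose_kronecker]

variable [Fintype A] [DecidableEq A] [Fintype B] [DecidableEq B] [Fintype C] [DecidableEq C]

theorem reindex_prodAssoc_kronecker_mul (M M' : Matrix (A × B) (A × B) ℂ) (N N' : Matrix C C ℂ) :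
    reindex (Equiv.prodAssoc A B C) (Equiv.prodAssoc A B C) (M ⊗ₖ N)
      * reindex (Equiv.prodAssoc A B C) (Equiv.prodAssoc A B C) (M' ⊗ₖ N')
      = reindex (Equiv.prodAssoc A B C) (Equiv.prodAssoc A B C) ((M * M') ⊗ₖ (N * N')) := by
  rw [← coe_reindexAlgEquiv ℂ ℂ, ← map_mul, mul_kronecker_mul]

theorem conjTranspose_mul_self_reindex_prodAssoc_kronecker {U : Matrix (A × B) (A × B) ℂ}
    {σ : Matrix C C ℂ} (hU : Uᴴ * U = 1) (hσ : σᴴ * σ = 1) :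
    (reindex (Equiv.prodAssoc A B C) (Equiv.prodAssoc A B C) (U ⊗ₖ σ))ᴴ
      * reindex (Equiv.prodAssoc A B C) (Equiv.prodAssoc A B C) (U ⊗ₖ σ) = 1 := by
  rw [conjTranspose_reindex_prodAssoc_kronecker, reindex_prodAssoc_kronecker_mul, hU, hσ,
    one_kronecker_one, reindex_apply, submatrix_one_equiv]

theorem ptraceB_conj_reindex_prodAssoc_kronecker (U : Matrix (A × B) (A × B) ℂ)
    {σ : Matrix C C ℂ} (hσ : σᴴ * σ = 1) (ρ : Matrix A A ℂ) (ρB : Matrix B B ℂ)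
    (ρC : Matrix C C ℂ) :
    ptraceB (reindex (Equiv.prodAssoc A B C) (Equiv.prodAssoc A B C) (U ⊗ₖ σ)
        * (ρ ⊗ₖ (ρB ⊗ₖ ρC))
        * (reindex (Equiv.prodAssoc A B C) (Equiv.prodAssoc A B C) (U ⊗ₖ σ))ᴴ)
      = ρC.trace • ptraceB (U * (ρ ⊗ₖ ρB) * Uᴴ) := by
  rw [← kronecker_assoc, conjTranspose_reindex_prodAssoc_kronecker,
    reindex_prodAssoc_kronecker_mul, reindex_prodAssoc_kronecker_mul,
    ptraceB_reindex_prodAssoc_kronecker, trace_mul_cycle, hσ, Matrix.one_mul]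

theorem hto_kronecker_one_add_one_kronecker [Nonempty B] [Nonempty C] {H_B : Matrix B B ℂ}
    {H_C : Matrix C C ℂ} (hHB : H_B.IsHermitian) (hHC : H_C.IsHermitian) (b : ℝ)
    {U : Matrix (A × B) (A × B) ℂ} {σ : Matrix C C ℂ} (hU : Uᴴ * U = 1) (hσ : σᴴ * σ = 1) :
    hto (H_B ⊗ₖ (1 : Matrix C C ℂ) + (1 : Matrix B B ℂ) ⊗ₖ H_C) b
        (reindex (Equiv.prodAssoc A B C) (Equiv.prodAssoc A B C) (U ⊗ₖ σ))
      = hto H_B b U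
        + ((gibbs H_C b * (σᴴ * H_C * σ)).trace - eqEnergy H_C b) • (1 : Matrix A A ℂ) := by
  have hptr : ptraceB ((1 : Matrix A A ℂ) ⊗ₖ (gibbs H_B b ⊗ₖ gibbs H_C b)
        * (reindex (Equiv.prodAssoc A B C) (Equiv.prodAssoc A B C) (U ⊗ₖ σ))ᴴ
        * ((1 : Matrix A A ℂ) ⊗ₖ (H_B ⊗ₖ (1 : Matrix C C ℂ) + (1 : Matrix B B ℂ) ⊗ₖ H_C))
        * reindex (Equiv.prodAssoc A B C) (Equiv.prodAssoc A B C) (U ⊗ₖ σ))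
      = ptraceB (((1 : Matrix A A ℂ) ⊗ₖ gibbs H_B b) * Uᴴ * ((1 : Matrix A A ℂ) ⊗ₖ H_B) * U)
        + (gibbs H_C b * (σᴴ * H_C * σ)).trace • (1 : Matrix A A ℂ) := by
    rw [kronecker_add, Matrix.mul_add, Matrix.add_mul, ptraceB_add, ← kronecker_assoc,
      ← kronecker_assoc, ← kronecker_assoc, conjTranspose_reindex_prodAssoc_kronecker]
    simp only [reindex_prodAssoc_kronecker_mul, ptraceB_reindex_prodAssoc_kronecker,
      one_kronecker_one, Matrix.mul_one, Matrix.mul_assoc, hσ, hU, ptraceB_kronecker,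
      trace_gibbs hHB, trace_gibbs hHC, one_smul]
  rw [hto, hto, gibbs_kronecker_one_add_one_kronecker, hptr,
    eqEnergy_kronecker_one_add_one_kronecker hHB hHC, add_smul, sub_smul, Complex.coe_smul]
  abel

end CoupledSetup

section TwoLevelSystem

theorem isHermitian_qubit_hamiltonian (Δ : ℝ) :
    (diagonal ![((Δ / 2 : ℝ) : ℂ), ((-Δ / 2 : ℝ) : ℂ)]).IsHermitian := by
  refine isHermitian_diagonal_of_self_adjoint _ ?_
  ext i
  fin_cases i <;> simp

theorem pauliX_conjTranspose_mul_self :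
    (!![0, 1; 1, 0] : Matrix (Fin 2) (Fin 2) ℂ)ᴴ * !![0, 1; 1, 0] = 1 := by
  ext i j
  fin_cases i <;> fin_cases j <;> simp [mul_apply, Fin.sum_univ_two]

theorem pauliX_conjTranspose_mul_diagonal_mul_pauliX (p q : ℂ) :
    (!![0, 1; 1, 0] : Matrix (Fin 2) (Fin 2) ℂ)ᴴ * diagonal ![p, q] * !![0, 1; 1, 0]
      = diagonal ![q, p] := by
  ext i j
  fin_cases i <;> fin_cases j <;> simp [mul_apply, Fin.sum_univ_two]

theorem pauliX_conj_qubit_hamiltonian (Δ : ℝ) :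
    (!![0, 1; 1, 0] : Matrix (Fin 2) (Fin 2) ℂ)ᴴ * diagonal ![((Δ / 2 : ℝ) : ℂ), ((-Δ / 2 : ℝ) : ℂ)]
        * !![0, 1; 1, 0]
      = -diagonal ![((Δ / 2 : ℝ) : ℂ), ((-Δ / 2 : ℝ) : ℂ)] := by
  rw [pauliX_conjTranspose_mul_diagonal_mul_pauliX, diagonal_neg]
  congr 1
  ext i
  fin_cases i <;> simp [neg_div]

theorem trace_gibbs_qubit_hamiltonian_mul (Δ b : ℝ) :
    (gibbs (diagonal ![((Δ / 2 : ℝ) : ℂ), ((-Δ / 2 : ℝ) : ℂ)]) b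
        * diagonal ![((Δ / 2 : ℝ) : ℂ), ((-Δ / 2 : ℝ) : ℂ)]).trace
      = ((-(Δ / 2) * Real.tanh (b * Δ / 2) : ℝ) : ℂ) := by
  rw [gibbs, ← diagonal_smul, mexp_diagonal, smul_mul_assoc, diagonal_mul_diagonal, trace_smul,
    trace_diagonal, trace_diagonal, Fin.sum_univ_two, Fin.sum_univ_two]
  simp only [Pi.smul_apply, cons_val_zero, cons_val_one, cons_val_fin_one, Complex.real_smul,
    smul_eq_mul]
  push_cast
  have h1 : -(b : ℂ) * (Δ / 2) = -(b * Δ / 2 : ℂ) := by ring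
  have h2 : -(b : ℂ) * (-Δ / 2) = (b * Δ / 2 : ℂ) := by ring
  have hne : Complex.exp (b * Δ / 2 : ℂ) + Complex.exp (-(b * Δ / 2 : ℂ)) ≠ 0 := by
    exact_mod_cast (by positivity : 0 < Real.exp (b * Δ / 2) + Real.exp (-(b * Δ / 2))).ne'
  rw [h1, h2, Complex.tanh_eq_sinh_div_cosh, Complex.sinh, Complex.cosh, add_comm (Complex.exp _)]
  field_simp
  ring

end TwoLevelSystem

theorem hto_shift_by_constant_general
    {A B : Type*} [Fintype A] [DecidableEq A]
    [Fintype B] [DecidableEq B] [Nonempty B]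
    (H_B : Matrix B B ℂ) (hH : H_B.IsHermitian) {b : ℝ}
    (U : Matrix (A × B) (A × B) ℂ) (hU : Uᴴ * U = 1)
    (Δ : ℝ)
    (H_C : Matrix (Fin 2) (Fin 2) ℂ)
    (hHC : H_C = Matrix.diagonal ![((Δ / 2 : ℝ) : ℂ), ((-Δ / 2 : ℝ) : ℂ)])
    (σx : Matrix (Fin 2) (Fin 2) ℂ) (hσx : σx = !![0, 1; 1, 0])
    (H_BC : Matrix (B × Fin 2) (B × Fin 2) ℂ)
    (hHBC : H_BC = H_B ⊗ₖ (1 : Matrix (Fin 2) (Fin 2) ℂ) + (1 : Matrix B B ℂ) ⊗ₖ H_C)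
    (V : Matrix (A × B × Fin 2) (A × B × Fin 2) ℂ)
    (hV : V = Matrix.reindex (Equiv.prodAssoc A B (Fin 2)) (Equiv.prodAssoc A B (Fin 2))
      (U ⊗ₖ σx)) :
    gibbs H_BC b = gibbs H_B b ⊗ₖ gibbs H_C b ∧
    Vᴴ * V = 1 ∧
    (∀ ρ : Matrix A A ℂ, IsDensityMatrix ρ →
      ptraceB (V * (ρ ⊗ₖ (gibbs H_B b ⊗ₖ gibbs H_C b)) * Vᴴ) =
        ptraceB (U * (ρ ⊗ₖ gibbs H_B b) * Uᴴ)) ∧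
    hto H_BC b V = hto H_B b U
      + ((Δ * Real.tanh (b * Δ / 2) : ℝ) : ℂ) • (1 : Matrix A A ℂ) := by
  subst hHC hσx hHBC hV
  have hHC := isHermitian_qubit_hamiltonian Δ
  have hσ := pauliX_conjTranspose_mul_self
  refine ⟨gibbs_kronecker_one_add_one_kronecker _ _ b,
    conjTranspose_mul_self_reindex_prodAssoc_kronecker hU hσ,
    fun ρ _ => by rw [ptraceB_conj_reindex_prodAssoc_kronecker U hσ, trace_gibbs hHC, one_smul], ?_⟩
  rw [hto_kronecker_one_add_one_kronecker hH hHC b hU hσ, pauliX_conj_qubit_hamiltonian,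
    Matrix.mul_neg, trace_neg, eqEnergy, trace_gibbs_qubit_hamiltonian_mul, Complex.ofReal_re]
  congr 2
  push_cast
  ring

/-- Shifting an HTO by a constant via an auxiliary two-level system. -/
theorem hto_shift_by_constant
    {A B : Type*} [Fintype A] [DecidableEq A] [Nonempty A]
    [Fintype B] [DecidableEq B] [Nonempty B]
    (H_B : Matrix B B ℂ) (hH : H_B.IsHermitian) {b : ℝ} (hb : 0 < b)
    (U : Matrix (A × B) (A × B) ℂ) (hU : Uᴴ * U = 1)
    (Δ : ℝ)
    (H_C : Matrix (Fin 2) (Fin 2) ℂ)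
    (hHC : H_C = Matrix.diagonal ![((Δ / 2 : ℝ) : ℂ), ((-Δ / 2 : ℝ) : ℂ)])
    (σx : Matrix (Fin 2) (Fin 2) ℂ) (hσx : σx = !![0, 1; 1, 0])
    (H_BC : Matrix (B × Fin 2) (B × Fin 2) ℂ)
    (hHBC : H_BC = H_B ⊗ₖ (1 : Matrix (Fin 2) (Fin 2) ℂ) + (1 : Matrix B B ℂ) ⊗ₖ H_C)
    (V : Matrix (A × B × Fin 2) (A × B × Fin 2) ℂ)
    (hV : V = Matrix.reindex (Equiv.prodAssoc A B (Fin 2)) (Equiv.prodAssoc A B (Fin 2))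
      (U ⊗ₖ σx)) :
    gibbs H_BC b = gibbs H_B b ⊗ₖ gibbs H_C b ∧
    Vᴴ * V = 1 ∧
    (∀ ρ : Matrix A A ℂ, IsDensityMatrix ρ →
      ptraceB (V * (ρ ⊗ₖ (gibbs H_B b ⊗ₖ gibbs H_C b)) * Vᴴ) =
        ptraceB (U * (ρ ⊗ₖ gibbs H_B b) * Uᴴ)) ∧
    hto H_BC b V = hto H_B b U
      + ((Δ * Real.tanh (b * Δ / 2) : ℝ) : ℂ) • (1 : Matrix A A ℂ) :=
  hto_shift_by_constant_general H_B hH U hU Δ H_C hHC σx hσx H_BC hHBC V hV
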